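/- arXiv:1411.1278 — 4 statements merged into one kernel-verified Lean document; each statement's English description precedes it below -/
import Mathlib

section
/- Let φ ∈ C²(ℝⁿ) with ∇φ(x₀) ≠ 0. Then as ε → 0, (max_{‖y−x₀‖≤ε} φ(y) + min_{‖y−x₀‖≤ε} φ(y))/2 − φ(x₀) = (ε²/2)·Δ_∞φ(x₀)/‖∇φ(x₀)‖² + o(ε²). -/
open Asymptotics
open scoped Topology
open Filter Metric
open scoped RealInnerProductSpace



lemma taylor_two {E : Type*} [NormedAddCommGroup E] [NormedSpace ℝ E]
    (f : E → ℝ) (hf : ContDiff ℝ 2 f) (x₀ : E) :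
    (fun h : E => f (x₀ + h) - f x₀ - fderiv ℝ f x₀ h
      - (1/2 : ℝ) * fderiv ℝ (fderiv ℝ f) x₀ h h) =o[𝓝 0] fun h => ‖h‖ ^ 2 := by
  set f' := fderiv ℝ f with hf'def
  set A := fderiv ℝ (fderiv ℝ f) x₀ with hAdef
  have hdiff : Differentiable ℝ f := hf.differentiable (by norm_num)
  have hf'C : ContDiff ℝ 1 (fderiv ℝ f) := hf.fderiv_right (by norm_num)
  have hA : HasFDerivAt f' A x₀ := (hf'C.differentiable (by norm_num) x₀).hasFDerivAt
  have hsymm : ∀ v w, A v w = A w v := fun v w =>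
    (hf.contDiffAt.isSymmSndFDerivAt (by norm_num)) v w
  set R : E → ℝ := fun h => f (x₀ + h) - f x₀ - f' x₀ h - (1/2 : ℝ) * A h h with hRdef
  have hR0 : R 0 = 0 := by simp [hRdef]
  -- derivative of R
  have hRderiv : ∀ k : E, HasFDerivAt R (f' (x₀ + k) - f' x₀ - A k) k := by
    intro k
    have h1 : HasFDerivAt (fun h : E => f (x₀ + h)) (f' (x₀ + k)) k := by
      have := (hdiff (x₀ + k)).hasFDerivAt.comp k ((hasFDerivAt_id k).const_add x₀)
      simpa [Function.comp_def] using this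
    have hq : HasFDerivAt (fun h : E => A h h) (A k + A.flip k) k := by
      have hb : IsBoundedBilinearMap ℝ (fun p : E × E => A p.1 p.2) :=
        A.isBoundedBilinearMap
      have hdiag : HasFDerivAt (fun h : E => (h, h))
          ((ContinuousLinearMap.id ℝ E).prod (ContinuousLinearMap.id ℝ E)) k :=
        (hasFDerivAt_id k).prodMk (hasFDerivAt_id k)
      have := HasFDerivAt.comp (f := fun h : E => (h, h)) k (hb.hasFDerivAt (k, k)) hdiag
      refine this.congr_fderiv ?_
      ext e
      simp [IsBoundedBilinearMap.deriv_apply, add_comm]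
    have hq2 : HasFDerivAt (fun h : E => (1/2 : ℝ) * A h h)
        ((1/2 : ℝ) • (A k + A.flip k)) k := by
      simpa [smul_eq_mul, Pi.smul_def] using hq.const_smul (1/2 : ℝ)
    have hcomb := ((h1.sub_const (f x₀)).sub ((f' x₀).hasFDerivAt)).sub hq2
    refine hcomb.congr_fderiv ?_
    ext e
    simp only [ContinuousLinearMap.sub_apply, ContinuousLinearMap.smul_apply,
      ContinuousLinearMap.add_apply, ContinuousLinearMap.flip_apply]
    simp only [smul_eq_mul]
    rw [hsymm e k]
    ring
  -- little-o estimate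
  rw [isLittleO_iff]
  intro c hc
  have hA' := hasFDerivAt_iff_isLittleO_nhds_zero.1 hA
  rw [isLittleO_iff] at hA'
  have hev := hA' (half_pos hc)
  rcases Metric.eventually_nhds_iff.1 hev with ⟨δ, hδ, hball⟩
  have hmem : Metric.ball (0 : E) δ ∈ 𝓝 (0 : E) := Metric.ball_mem_nhds _ hδ
  filter_upwards [hmem] with h hh
  have hhn : ‖h‖ < δ := by simpa using hh
  -- mean value on closed ball of radius ‖h‖
  have bound : ∀ k ∈ closedBall (0 : E) ‖h‖, ‖f' (x₀ + k) - f' x₀ - A k‖ ≤ c / 2 * ‖h‖ := by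
    intro k hk
    have hk' : ‖k‖ ≤ ‖h‖ := by simpa using hk
    have hk'' : dist k 0 < δ := by
      simpa [dist_eq_norm] using lt_of_le_of_lt hk' hhn
    have h2 := hball hk''
    calc ‖f' (x₀ + k) - f' x₀ - A k‖ ≤ c / 2 * ‖k‖ := by simpa [dist_eq_norm] using h2
      _ ≤ c / 2 * ‖h‖ := mul_le_mul_of_nonneg_left hk' (by positivity)
  have key : ‖R h - R 0‖ ≤ (c / 2 * ‖h‖) * ‖h - 0‖ :=
    Convex.norm_image_sub_le_of_norm_hasFDerivWithin_le
      (f' := fun k => f' (x₀ + k) - f' x₀ - A k)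
      (fun k _ => (hRderiv k).hasFDerivWithinAt) bound (convex_closedBall _ _)
      (mem_closedBall_self (norm_nonneg h))
      (by simp [mem_closedBall, dist_eq_norm])
  rw [hR0, sub_zero, sub_zero] at key
  calc ‖R h‖ ≤ (c / 2 * ‖h‖) * ‖h‖ := key
    _ ≤ c * ‖‖h‖ ^ 2‖ := by
        rw [norm_pow, norm_norm]
        nlinarith [norm_nonneg h, mul_nonneg (norm_nonneg h) (norm_nonneg h)]

/-- The infinity-Laplacian Δ_∞ v(x) = ⟨D²v(x) ∇v(x), ∇v(x)⟩. -/
noncomputable def infLap {n : ℕ} (v : EuclideanSpace ℝ (Fin n) → ℝ)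
    (x : EuclideanSpace ℝ (Fin n)) : ℝ :=
  fderiv ℝ (fderiv ℝ v) x (gradient v x) (gradient v x)



lemma sSup_est {n : ℕ} (φ : EuclideanSpace ℝ (Fin n) → ℝ) (hφ : ContDiff ℝ 2 φ)
    (x₀ : EuclideanSpace ℝ (Fin n)) (hgrad : gradient φ x₀ ≠ 0) :
    (fun ε : ℝ => sSup (φ '' Metric.closedBall x₀ ε) - φ x₀ - ε * ‖gradient φ x₀‖
        - ε ^ 2 / 2 * (infLap φ x₀ / ‖gradient φ x₀‖ ^ 2)) =o[𝓝[>] (0:ℝ)]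
      fun ε => ε ^ 2 := by
  set G := gradient φ x₀ with hGdef
  have hg : (0:ℝ) < ‖G‖ := norm_pos_iff.2 hgrad
  set A := fderiv ℝ (fderiv ℝ φ) x₀ with hAdef
  set u : EuclideanSpace ℝ (Fin n) := ‖G‖⁻¹ • G with hudef
  have hu : ‖u‖ = 1 := norm_smul_inv_norm hgrad
  have hinner : ∀ h : EuclideanSpace ℝ (Fin n), ⟪G, h⟫ = fderiv ℝ φ x₀ h := fun h =>
    InnerProductSpace.toDual_symm_apply
  have hinfL : infLap φ x₀ = A G G := rfl
  have hQu : infLap φ x₀ / ‖G‖ ^ 2 = A u u := by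
    rw [hinfL, hudef]
    simp only [map_smul, ContinuousLinearMap.smul_apply, smul_eq_mul]
    rw [div_eq_iff (pow_ne_zero 2 hg.ne'), pow_two]
    have h1 : ‖G‖⁻¹ * ‖G‖ = 1 := inv_mul_cancel₀ hg.ne'
    calc A G G = (‖G‖⁻¹ * ‖G‖) * ((‖G‖⁻¹ * ‖G‖) * A G G) := by rw [h1]; ring
      _ = ‖G‖⁻¹ * (‖G‖⁻¹ * A G G) * (‖G‖ * ‖G‖) := by ring
  set M := ‖A‖ with hMdef
  have hM : (0:ℝ) ≤ M := norm_nonneg A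
  have hQb : ∀ v w : EuclideanSpace ℝ (Fin n), |A v w| ≤ M * ‖v‖ * ‖w‖ := fun v w => by
    simpa using A.le_opNorm₂ v w
  have hT := taylor_two φ hφ x₀
  rw [isLittleO_iff] at hT
  rw [isLittleO_iff]
  intro c hc
  rcases Metric.eventually_nhds_iff.1 (hT (show (0:ℝ) < c/4 by positivity))
    with ⟨δ₁, hδ₁, hTb⟩
  have E1 : ∀ᶠ ε in 𝓝[>] (0:ℝ), ε < δ₁ :=
    Filter.Eventually.filter_mono nhdsWithin_le_nhds (eventually_lt_nhds hδ₁)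
  have E2 : ∀ᶠ ε in 𝓝[>] (0:ℝ), M * Real.sqrt (4*M*ε/‖G‖) < c/4 := by
    have hcont : Continuous fun ε : ℝ => M * Real.sqrt (4*M*ε/‖G‖) := by fun_prop
    have h0 : M * Real.sqrt (4*M*(0:ℝ)/‖G‖) = 0 := by simp
    have htd : Filter.Tendsto (fun ε : ℝ => M * Real.sqrt (4*M*ε/‖G‖)) (𝓝 0) (𝓝 0) :=
      hcont.tendsto' 0 0 h0
    exact Filter.Eventually.filter_mono nhdsWithin_le_nhds
      (htd.eventually_lt_const (by positivity))
  filter_upwards [E1, E2, self_mem_nhdsWithin] with ε hε1 hε2 hε0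
  replace hε0 : (0:ℝ) < ε := hε0
  -- Taylor bound on the ball
  have hTay : ∀ h : EuclideanSpace ℝ (Fin n), ‖h‖ ≤ ε →
      |φ (x₀ + h) - φ x₀ - ⟪G, h⟫ - 1/2 * A h h| ≤ c/4 * ε^2 := by
    intro h hh
    have hd : dist h 0 < δ₁ := by
      rw [dist_zero_right]; exact lt_of_le_of_lt hh hε1
    have := hTb hd
    rw [hinner h]
    have hb : ‖φ (x₀ + h) - φ x₀ - (fderiv ℝ φ x₀) h - 1/2 * A h h‖
        ≤ c/4 * ‖‖h‖^2‖ := this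
    rw [Real.norm_eq_abs, Real.norm_eq_abs, abs_of_nonneg (sq_nonneg ‖h‖)] at hb
    calc |φ (x₀ + h) - φ x₀ - (fderiv ℝ φ x₀) h - 1/2 * A h h| ≤ c/4 * ‖h‖^2 := hb
      _ ≤ c/4 * ε^2 := by
          apply mul_le_mul_of_nonneg_left _ (by positivity)
          exact pow_le_pow_left₀ (norm_nonneg h) hh 2
  -- key linear-quadratic bound
  have keyLQ : ∀ h : EuclideanSpace ℝ (Fin n), ‖h‖ ≤ ε →
      ⟪G, h⟫ + 1/2 * A h h ≤ ε * ‖G‖ + ε^2/2 * A u u + c/4 * ε^2 := by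
    intro h hh
    have hGh : ⟪G, h⟫ ≤ ε * ‖G‖ := by
      calc ⟪G, h⟫ ≤ ‖G‖ * ‖h‖ := real_inner_le_norm G h
        _ ≤ ε * ‖G‖ := by rw [mul_comm]; exact mul_le_mul_of_nonneg_right hh hg.le
    have hAuu : |A u u| ≤ M := by
      have := hQb u u
      rwa [hu, mul_one, mul_one] at this
    by_cases hcase : ⟪G, h⟫ ≤ ε * ‖G‖ - 2*M*ε^2
    · have h1 : |A h h| ≤ M * ε^2 := by
        calc |A h h| ≤ M * ‖h‖ * ‖h‖ := hQb h h
          _ ≤ M * ε * ε := by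
              apply mul_le_mul (mul_le_mul_of_nonneg_left hh hM) hh (norm_nonneg h)
              positivity
          _ = M * ε^2 := by ring
      have habs1 := abs_le.1 h1
      have habs2 := abs_le.1 hAuu
      have p1 : -M * ε^2 ≤ A u u * ε^2 :=
        mul_le_mul_of_nonneg_right habs2.1 (sq_nonneg ε)
      have p2 : (0:ℝ) ≤ c/4 * ε^2 := by positivity
      linarith [habs1.2, hcase, p1, p2]
    · push_neg at hcase
      have hnormh2 : ‖h‖^2 ≤ ε^2 := by
        have := pow_le_pow_left₀ (norm_nonneg h) hh 2
        simpa using this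
      -- distance to ε • u
      have hip : ⟪h, ε • u⟫ = ε * ‖G‖⁻¹ * ⟪G, h⟫ := by
        rw [real_inner_smul_right, hudef, real_inner_smul_right, real_inner_comm]
        ring
      have hnu : ‖ε • u‖ = ε := by
        rw [norm_smul, hu, mul_one, Real.norm_eq_abs, abs_of_pos hε0]
      have hgi : ‖G‖⁻¹ * ‖G‖ = 1 := inv_mul_cancel₀ hg.ne'
      have hd2 : ‖h - ε • u‖^2 ≤ 4*M/‖G‖ * ε^3 := by
        have hexp : ‖h - ε • u‖^2 = ‖h‖^2 - 2 * ⟪h, ε • u⟫ + ‖ε • u‖^2 :=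
          norm_sub_sq_real h (ε • u)
        have hpos : (0:ℝ) < ε * ‖G‖⁻¹ := by positivity
        have hmul : ε * ‖G‖⁻¹ * (ε * ‖G‖ - 2*M*ε^2) ≤ ε * ‖G‖⁻¹ * ⟪G, h⟫ :=
          mul_le_mul_of_nonneg_left hcase.le hpos.le
        have hval : ε * ‖G‖⁻¹ * (ε * ‖G‖ - 2*M*ε^2) = ε^2 - 2*(M*‖G‖⁻¹)*ε^3 := by
          have h5 : ε * ‖G‖⁻¹ * (ε * ‖G‖ - 2*M*ε^2)
              = ε^2 * (‖G‖⁻¹ * ‖G‖) - 2*(M*‖G‖⁻¹)*ε^3 := by ring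
          rw [h5, hgi]
          ring
        rw [hexp, hip, hnu]
        rw [hval] at hmul
        have h6 : 4*M/‖G‖ * ε^3 = 4*(M*‖G‖⁻¹)*ε^3 := by
          rw [div_eq_mul_inv]; ring
        rw [h6]
        linarith [hnormh2, hmul]
      have hd : ‖h - ε • u‖ ≤ ε * Real.sqrt (4*M*ε/‖G‖) := by
        have h1 : ‖h - ε • u‖ = Real.sqrt (‖h - ε • u‖^2) :=
          (Real.sqrt_sq (norm_nonneg _)).symm
        rw [h1]
        have h2 : (4:ℝ)*M/‖G‖ * ε^3 = ε^2 * (4*M*ε/‖G‖) := by ring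
        calc Real.sqrt (‖h - ε • u‖^2) ≤ Real.sqrt (4*M/‖G‖ * ε^3) :=
              Real.sqrt_le_sqrt hd2
          _ = ε * Real.sqrt (4*M*ε/‖G‖) := by
              rw [h2, Real.sqrt_mul (sq_nonneg ε), Real.sqrt_sq hε0.le]
      -- quadratic comparison
      have hiden : A h h - A (ε • u) (ε • u) = A h (h - ε • u) + A (h - ε • u) (ε • u) := by
        simp only [map_sub, ContinuousLinearMap.sub_apply]
        ring
      have hb1 : |A h (h - ε • u)| ≤ M * ε * (ε * Real.sqrt (4*M*ε/‖G‖)) := by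
        calc |A h (h - ε • u)| ≤ M * ‖h‖ * ‖h - ε • u‖ := hQb _ _
          _ ≤ M * ε * (ε * Real.sqrt (4*M*ε/‖G‖)) := by
              apply mul_le_mul (mul_le_mul_of_nonneg_left hh hM) hd (norm_nonneg _)
              positivity
      have hb2 : |A (h - ε • u) (ε • u)| ≤ M * (ε * Real.sqrt (4*M*ε/‖G‖)) * ε := by
        calc |A (h - ε • u) (ε • u)| ≤ M * ‖h - ε • u‖ * ‖ε • u‖ := hQb _ _
          _ ≤ M * (ε * Real.sqrt (4*M*ε/‖G‖)) * ε := by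
              rw [hnu]
              exact mul_le_mul_of_nonneg_right (mul_le_mul_of_nonneg_left hd hM) hε0.le
      have hAeu : A (ε • u) (ε • u) = ε^2 * A u u := by
        simp only [map_smul, ContinuousLinearMap.smul_apply, smul_eq_mul]
        ring
      have habs1 := abs_le.1 hb1
      have habs2 := abs_le.1 hb2
      have q1 : A h h ≤ ε^2 * A u u + 2*(M * Real.sqrt (4*M*ε/‖G‖))*ε^2 := by
        linarith [habs1.2, habs2.2, hiden, hAeu]
      have q2 : (M * Real.sqrt (4*M*ε/‖G‖)) * ε^2 ≤ c/4 * ε^2 :=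
        mul_le_mul_of_nonneg_right hε2.le (sq_nonneg ε)
      linarith [hGh, q1, q2]
  -- nonempty and bounded image
  have hne : (φ '' Metric.closedBall x₀ ε).Nonempty :=
    ⟨φ x₀, Set.mem_image_of_mem _ (mem_closedBall_self hε0.le)⟩
  have hbdd : BddAbove (φ '' Metric.closedBall x₀ ε) :=
    (isCompact_closedBall x₀ ε).bddAbove_image hφ.continuous.continuousOn
  -- upper bound
  have hub : sSup (φ '' Metric.closedBall x₀ ε)
      ≤ φ x₀ + ε * ‖G‖ + ε^2/2 * A u u + c/2 * ε^2 := by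
    apply csSup_le hne
    rintro y ⟨x, hx, rfl⟩
    have hh : ‖x - x₀‖ ≤ ε := by rwa [mem_closedBall, dist_eq_norm] at hx
    have h1 := hTay (x - x₀) hh
    have h2 := keyLQ (x - x₀) hh
    rw [add_sub_cancel] at h1
    have h3 := (abs_le.1 h1).2
    linarith
  -- lower bound
  have hlb : φ x₀ + ε * ‖G‖ + ε^2/2 * A u u - c/4 * ε^2
      ≤ sSup (φ '' Metric.closedBall x₀ ε) := by
    have hnu : ‖ε • u‖ = ε := by
      rw [norm_smul, hu, mul_one, Real.norm_eq_abs, abs_of_pos hε0]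
    have hmem : x₀ + ε • u ∈ Metric.closedBall x₀ ε := by
      rw [mem_closedBall, dist_eq_norm, add_sub_cancel_left, hnu]
    have hle := le_csSup hbdd (Set.mem_image_of_mem φ hmem)
    have h1 := hTay (ε • u) (by rw [hnu])
    have h2 := (abs_le.1 h1).1
    have hipGu : ⟪G, ε • u⟫ = ε * ‖G‖ := by
      rw [real_inner_smul_right, hudef, real_inner_smul_right, real_inner_self_eq_norm_sq]
      field_simp
    have hAeu : A (ε • u) (ε • u) = ε^2 * A u u := by
      simp only [map_smul, ContinuousLinearMap.smul_apply, smul_eq_mul]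
      ring
    rw [hipGu, hAeu] at h2
    linarith
  rw [hQu, Real.norm_eq_abs, Real.norm_eq_abs, abs_of_nonneg (sq_nonneg ε)]
  rw [abs_le]
  constructor <;> linarith [mul_nonneg hc.le (sq_nonneg ε)]

/-- Asymptotic mean value formula: for φ ∈ C² with ∇φ(x₀) ≠ 0,
(max_{B̄(x₀,ε)} φ + min_{B̄(x₀,ε)} φ)/2 − φ(x₀) = (ε²/2) Δ_∞φ(x₀)/‖∇φ(x₀)‖² + o(ε²). -/

theorem asymptotic_mean_value_formula {n : ℕ}
    (φ : EuclideanSpace ℝ (Fin n) → ℝ) (hφ : ContDiff ℝ 2 φ)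
    (x₀ : EuclideanSpace ℝ (Fin n)) (hgrad : gradient φ x₀ ≠ 0) :
    (fun ε : ℝ =>
        (sSup (φ '' Metric.closedBall x₀ ε) + sInf (φ '' Metric.closedBall x₀ ε)) / 2
          - φ x₀ - ε ^ 2 / 2 * (infLap φ x₀ / ‖gradient φ x₀‖ ^ 2))
      =o[𝓝[>] (0:ℝ)] (fun ε => ε ^ 2) := by
  have hψ : ContDiff ℝ 2 (fun x => -φ x) := hφ.neg
  have hgradψ : gradient (fun x => -φ x) x₀ = -gradient φ x₀ := by
    show (InnerProductSpace.toDual ℝ (EuclideanSpace ℝ (Fin n))).symm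
        (fderiv ℝ (fun x => -φ x) x₀) = _
    rw [fderiv_fun_neg, map_neg]
    rfl
  have hgradψ0 : gradient (fun x => -φ x) x₀ ≠ 0 := by
    rw [hgradψ]; exact neg_ne_zero.2 hgrad
  have hf2 : fderiv ℝ (fderiv ℝ (fun x => -φ x)) x₀ = -fderiv ℝ (fderiv ℝ φ) x₀ := by
    have h1 : fderiv ℝ (fun x => -φ x) = fun x => -fderiv ℝ φ x :=
      funext fun x => fderiv_neg
    rw [h1, fderiv_fun_neg]
  have hinfψ : infLap (fun x => -φ x) x₀ = -infLap φ x₀ := by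
    unfold infLap
    rw [hgradψ, hf2]
    simp
  have hnψ : ‖gradient (fun x => -φ x) x₀‖ = ‖gradient φ x₀‖ := by
    rw [hgradψ, norm_neg]
  have hsup : ∀ ε : ℝ, sSup ((fun x => -φ x) '' Metric.closedBall x₀ ε)
      = -sInf (φ '' Metric.closedBall x₀ ε) := by
    intro ε
    have himg : (fun x => -φ x) '' Metric.closedBall x₀ ε
        = -(φ '' Metric.closedBall x₀ ε) := by
      ext y
      simp only [Set.mem_image, Set.mem_neg]
      constructor
      · rintro ⟨x, hx, rfl⟩; exact ⟨x, hx, by ring⟩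
      · rintro ⟨x, hx, hxy⟩; exact ⟨x, hx, by rw [hxy]; ring⟩
    rw [himg, Real.sInf_def, neg_neg]
  have h1 := sSup_est φ hφ x₀ hgrad
  have h2 := sSup_est (fun x => -φ x) hψ x₀ hgradψ0
  have H := (h1.sub h2).const_mul_left (1/2 : ℝ)
  refine H.congr' (Filter.Eventually.of_forall fun ε => ?_) Filter.EventuallyEq.rfl
  simp only [hsup ε, hnψ, hinfψ]
  ring
end

section
/- Let v : Ω → ℝ be continuous and nonnegative on an open set Ω ⊆ ℝⁿ, and suppose v satisfies comparison with cones from below on Ω. If B(x₀, R) ⊆ Ω, 4r < R, and x, y ∈ B(x₀, r), then v(y) ≤ 3 v(x) (Harnack's inequality). -/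
/-- Harnack's inequality for nonnegative continuous functions satisfying
comparison with cones from below. -/
theorem harnack_comparison_with_cones {n : ℕ}
    (Ω : Set (EuclideanSpace ℝ (Fin n))) (hΩ : IsOpen Ω)
    (v : EuclideanSpace ℝ (Fin n) → ℝ)
    (hv : ContinuousOn v Ω) (hpos : ∀ x ∈ Ω, 0 ≤ v x)
    (hcca : ∀ D : Set (EuclideanSpace ℝ (Fin n)), IsOpen D → closure D ⊆ Ω →
      IsCompact (closure D) →
      ∀ (b : ℝ) (z : EuclideanSpace ℝ (Fin n)), z ∉ D →
        ∀ x ∈ D, sInf ((fun ξ => v ξ - b * ‖ξ - z‖) '' frontier D)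
          ≤ v x - b * ‖x - z‖)
    (x₀ : EuclideanSpace ℝ (Fin n)) (r R : ℝ)
    (hball : Metric.ball x₀ R ⊆ Ω) (hr : 0 < r) (hrR : 4 * r < R) :
    ∀ x ∈ Metric.ball x₀ r, ∀ y ∈ Metric.ball x₀ r, v y ≤ 3 * v x := by
  intro x hx y hy
  have hsub : Metric.ball x₀ r ⊆ Ω := by
    refine (Metric.ball_subset_ball ?_).trans hball; linarith
  by_cases hxy : x = y
  · subst hxy
    have := hpos x (hsub hx)
    linarith
  -- main case
  set ρ : ℝ := 3 * r with hρ
  have hρ0 : 0 < ρ := by positivity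
  set D : Set (EuclideanSpace ℝ (Fin n)) := Metric.ball y ρ \ {y} with hD
  have hDopen : IsOpen D := Metric.isOpen_ball.sdiff isClosed_singleton
  have hclcb : closure D ⊆ Metric.closedBall y ρ :=
    (closure_mono Set.diff_subset).trans Metric.closure_ball_subset_closedBall
  have hcbΩ : Metric.closedBall y ρ ⊆ Ω := by
    intro w hw
    apply hball
    have h1 : dist w y ≤ ρ := hw
    have h2 : dist y x₀ < r := hy
    have : dist w x₀ ≤ dist w y + dist y x₀ := dist_triangle _ _ _
    simp only [Metric.mem_ball]
    linarith
  have hclΩ : closure D ⊆ Ω := hclcb.trans hcbΩ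
  have hcomp : IsCompact (closure D) :=
    (isCompact_closedBall y ρ).of_isClosed_subset isClosed_closure hclcb
  have hyD : y ∉ D := fun h => h.2 rfl
  have hxD : x ∈ D := by
    constructor
    · have : dist x y ≤ dist x x₀ + dist x₀ y := dist_triangle _ _ _
      have h1 : dist x x₀ < r := hx
      have h2 : dist x₀ y < r := by rw [dist_comm]; exact hy
      simp only [Metric.mem_ball]
      linarith
    · simpa using hxy
  set b : ℝ := -(v y / ρ) with hb
  have key := hcca D hDopen hclΩ hcomp b y hyD x hxD
  have hvy : 0 ≤ v y := hpos y (hsub hy)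
  -- lower bound on frontier values
  have hlow : ∀ ξ ∈ frontier D, v y ≤ v ξ - b * ‖ξ - y‖ := by
    intro ξ hξ
    have hξcl : ξ ∈ Metric.closedBall y ρ := hclcb hξ.1
    have hξΩ : ξ ∈ Ω := hcbΩ hξcl
    have hvξ : 0 ≤ v ξ := hpos ξ hξΩ
    have hξnD : ξ ∉ D := by
      rw [hDopen.frontier_eq] at hξ; exact hξ.2
    by_cases hξy : ξ = y
    · subst hξy; simp
    · have hsphere : dist ξ y = ρ := by
        have : ξ ∉ Metric.ball y ρ := fun h => hξnD ⟨h, hξy⟩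
        have h1 : ρ ≤ dist ξ y := by simpa using this
        exact le_antisymm hξcl h1
      have hnorm : ‖ξ - y‖ = ρ := by rw [← dist_eq_norm]; exact hsphere
      rw [hnorm, hb]
      have : -(v y / ρ) * ρ = -(v y) := by field_simp
      rw [this]
      linarith
  -- frontier nonempty
  have hfne : (frontier D).Nonempty := by
    by_contra h
    rw [Set.not_nonempty_iff_eq_empty] at h
    have hclopen : IsClopen D := isClopen_iff_frontier_eq_empty.mpr h
    rcases isClopen_iff.mp hclopen with h0 | hu
    · exact (h0 ▸ hxD : x ∈ (∅ : Set _))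
    · exact hyD (hu ▸ Set.mem_univ y)
  have hinf : v y ≤ sInf ((fun ξ => v ξ - b * ‖ξ - y‖) '' frontier D) := by
    apply le_csInf (hfne.image _)
    rintro _ ⟨ξ, hξ, rfl⟩
    exact hlow ξ hξ
  have hkey2 : v y ≤ v x - b * ‖x - y‖ := hinf.trans key
  have hd : ‖x - y‖ ≤ 2 * r := by
    rw [← dist_eq_norm]
    have : dist x y ≤ dist x x₀ + dist x₀ y := dist_triangle _ _ _
    have h1 : dist x x₀ < r := hx
    have h2 : dist x₀ y < r := by rw [dist_comm]; exact hy
    linarith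
  have hbn : -b * ‖x - y‖ ≤ (2/3) * v y := by
    rw [hb, neg_neg]
    have : v y / ρ * ‖x - y‖ ≤ v y / ρ * (2 * r) := by
      apply mul_le_mul_of_nonneg_left hd (by positivity)
    calc v y / ρ * ‖x - y‖ ≤ v y / ρ * (2 * r) := this
      _ = (2/3) * v y := by rw [hρ]; field_simp
  have hk3 : v y ≤ v x + 2/3 * v y := by
    have h3 : v x - b * ‖x - y‖ = v x + -b * ‖x - y‖ := by ring
    calc v y ≤ v x - b * ‖x - y‖ := hkey2
      _ = v x + -b * ‖x - y‖ := h3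
      _ ≤ v x + 2/3 * v y := by linarith [hbn]
  linarith [hk3]
end

section
/- Let u : Ω → ℝ be upper semicontinuous on an open set Ω ⊆ ℝⁿ, locally bounded, and satisfy comparison with cones from above. Then u is continuous (indeed lower semicontinuous, hence continuous) at every point of Ω. -/
/-- An upper semicontinuous, locally bounded function satisfying comparison with
cones from above is continuous. -/
theorem comparison_with_cones_implies_continuous {n : ℕ}
    (Ω : Set (EuclideanSpace ℝ (Fin n))) (hΩ : IsOpen Ω)
    (u : EuclideanSpace ℝ (Fin n) → ℝ)
    (husc : UpperSemicontinuousOn u Ω)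
    (hbdd : ∀ x ∈ Ω, ∃ C : ℝ, ∀ᶠ y in nhds x, |u y| ≤ C)
    (hcca : ∀ D : Set (EuclideanSpace ℝ (Fin n)), IsOpen D → closure D ⊆ Ω →
      IsCompact (closure D) →
      ∀ (b : ℝ) (z : EuclideanSpace ℝ (Fin n)), z ∉ D →
        ∀ x ∈ D, u x - b * ‖x - z‖
          ≤ sSup ((fun ξ => u ξ - b * ‖ξ - z‖) '' frontier D)) :
    ContinuousOn u Ω := by
  intro x₀ hx₀
  rcases subsingleton_or_nontrivial (EuclideanSpace ℝ (Fin n)) with hs | hn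
  · have hu : u = fun _ => u x₀ := funext fun y => by rw [Subsingleton.elim y x₀]
    rw [hu]
    exact continuous_const.continuousWithinAt
  -- Main case: nontrivial space.
  obtain ⟨C, hC⟩ := hbdd x₀ hx₀
  rw [Metric.eventually_nhds_iff] at hC
  obtain ⟨ε, hε, hCb⟩ := hC
  obtain ⟨ε', hε', hΩb⟩ := Metric.isOpen_iff.mp hΩ x₀ hx₀
  set r : ℝ := min ε ε' / 5 with hr_def
  have hr : 0 < r := by positivity
  have hsub : Metric.closedBall x₀ (2 * r) ⊆ Metric.ball x₀ (min ε ε') := by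
    intro p hp
    rw [Metric.mem_closedBall] at hp
    rw [Metric.mem_ball]
    have : 0 < min ε ε' := lt_min hε hε'
    calc dist p x₀ ≤ 2 * r := hp
      _ < min ε ε' := by rw [hr_def]; linarith
  have hboundC : ∀ p ∈ Metric.closedBall x₀ (2 * r), |u p| ≤ C := by
    intro p hp
    exact hCb (lt_of_lt_of_le (Metric.mem_ball.mp (hsub hp)) (min_le_left _ _))
  have hΩsub : Metric.closedBall x₀ (2 * r) ⊆ Ω := fun p hp =>
    hΩb (Metric.mem_ball.mp (hsub hp) |>.trans_le (min_le_right _ _) |> Metric.mem_ball.mpr)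
  have hC0 : 0 ≤ C := le_trans (abs_nonneg _) (hboundC x₀ (by simp [Metric.mem_closedBall]; positivity))
  have hux₀ : |u x₀| ≤ C := hboundC x₀ (by simp [Metric.mem_closedBall]; positivity)
  -- Key estimate
  have key : ∀ y ∈ Metric.ball x₀ r, u x₀ - u y ≤ 2 * C * dist x₀ y / r := by
    intro y hy
    have hyd : dist y x₀ < r := Metric.mem_ball.mp hy
    have hyC : |u y| ≤ C := hboundC y (by
      rw [Metric.mem_closedBall]; nlinarith [dist_nonneg (x := y) (y := x₀)])
    by_cases hxy : x₀ = y
    · simp [hxy]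
    · set D : Set (EuclideanSpace ℝ (Fin n)) := Metric.ball y r \ {y} with hD_def
      have hDopen : IsOpen D := Metric.isOpen_ball.sdiff isClosed_singleton
      have hDclos : closure D = Metric.closedBall y r := by
        apply Set.Subset.antisymm
        · calc closure D ⊆ closure (Metric.ball y r) :=
                closure_mono Set.diff_subset
            _ = Metric.closedBall y r := closure_ball y hr.ne'
        · have h1 : Metric.ball y r ⊆ closure D := by
            have := (dense_compl_singleton y).open_subset_closure_inter
              (Metric.isOpen_ball (x := y) (ε := r))
            simpa [hD_def, Set.diff_eq] using this
          calc Metric.closedBall y r = closure (Metric.ball y r) := (closure_ball y hr.ne').symm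
            _ ⊆ closure (closure D) := closure_mono h1
            _ = closure D := closure_closure
      have hball_sub : Metric.closedBall y r ⊆ Metric.closedBall x₀ (2 * r) := by
        intro p hp
        rw [Metric.mem_closedBall] at hp ⊢
        calc dist p x₀ ≤ dist p y + dist y x₀ := dist_triangle _ _ _
          _ ≤ 2 * r := by linarith
      have hDΩ : closure D ⊆ Ω := hDclos ▸ hball_sub.trans hΩsub
      have hDcpt : IsCompact (closure D) := hDclos ▸ isCompact_closedBall y r
      have hfront : frontier D = Metric.sphere y r ∪ {y} := by
        rw [hDopen.frontier_eq, hDclos]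
        ext p
        simp only [hD_def, Set.mem_diff, Set.mem_union, Metric.mem_closedBall,
          Metric.mem_ball, Metric.mem_sphere, Set.mem_singleton_iff, not_and, not_not]
        constructor
        · rintro ⟨hle, h2⟩
          by_cases hp : p = y
          · exact Or.inr hp
          · left
            rcases lt_or_eq_of_le hle with hlt | heq
            · exact absurd (h2 hlt) hp
            · exact heq
        · rintro (heq | heq)
          · exact ⟨le_of_eq heq, fun hlt => absurd heq (ne_of_lt hlt)⟩
          · subst heq; exact ⟨by simp [hr.le], fun _ => rfl⟩
      set b : ℝ := (C - u y) / r with hb_def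
      have hb0 : 0 ≤ b := by
        apply div_nonneg _ hr.le
        have := abs_le.mp hyC
        linarith [this.2]
      have hzD : y ∉ D := by simp [hD_def]
      have hx₀D : x₀ ∈ D := by
        simp only [hD_def, Set.mem_diff, Metric.mem_ball, Set.mem_singleton_iff]
        exact ⟨by rwa [dist_comm], hxy⟩
      have happ := hcca D hDopen hDΩ hDcpt b y hzD x₀ hx₀D
      have hsup : sSup ((fun ξ => u ξ - b * ‖ξ - y‖) '' frontier D) ≤ u y := by
        apply csSup_le
        · refine ⟨u y - b * ‖y - y‖, Set.mem_image_of_mem _ ?_⟩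
          rw [hfront]; exact Or.inr rfl
        · rintro v ⟨ξ, hξ, rfl⟩
          rw [hfront] at hξ
          rcases hξ with hξ | hξ
          · have hd : ‖ξ - y‖ = r := by
              rw [← dist_eq_norm]; exact Metric.mem_sphere.mp hξ
            have hξC : |u ξ| ≤ C := hboundC ξ (hball_sub (Metric.sphere_subset_closedBall hξ))
            have := abs_le.mp hξC
            show u ξ - b * ‖ξ - y‖ ≤ u y
            rw [hd, hb_def, div_mul_cancel₀ _ hr.ne']
            linarith [this.2]
          · have hξy : ξ = y := hξ
            subst hξy
            show u ξ - b * ‖ξ - ξ‖ ≤ u ξ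
            simp
      have hest : u x₀ - b * ‖x₀ - y‖ ≤ u y := le_trans happ hsup
      have hnorm : ‖x₀ - y‖ = dist x₀ y := (dist_eq_norm _ _).symm
      rw [hnorm] at hest
      have hdnn : 0 ≤ dist x₀ y := dist_nonneg
      have hby : C - u y ≤ 2 * C := by
        have := abs_le.mp hyC; linarith [this.1]
      have hble : b * dist x₀ y ≤ 2 * C * dist x₀ y / r := by
        rw [hb_def, div_mul_eq_mul_div, div_le_div_iff₀ hr hr]
        nlinarith [mul_le_mul_of_nonneg_right (mul_le_mul_of_nonneg_right hby hdnn) hr.le]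
      linarith
  -- Conclude continuity within Ω at x₀.
  have husc' := husc x₀ hx₀
  rw [ContinuousWithinAt]
  apply tendsto_order.2
  constructor
  · intro a ha
    set δ : ℝ := min r (r * (u x₀ - a) / (2 * C + 1)) with hδ_def
    have hδ : 0 < δ := by
      apply lt_min hr
      have : 0 < u x₀ - a := sub_pos.mpr ha
      positivity
    have hev : ∀ᶠ y in nhds x₀, dist y x₀ < δ :=
      Metric.eventually_nhds_iff.mpr ⟨δ, hδ, fun _ h => h⟩
    filter_upwards [hev.filter_mono nhdsWithin_le_nhds] with y hy
    have hyb : y ∈ Metric.ball x₀ r := Metric.mem_ball.mpr (hy.trans_le (min_le_left _ _))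
    have hk := key y hyb
    have hd : dist x₀ y < r * (u x₀ - a) / (2 * C + 1) := by
      rw [dist_comm]; exact hy.trans_le (min_le_right _ _)
    have hdnn : 0 ≤ dist x₀ y := dist_nonneg
    have h2 : 2 * C * dist x₀ y / r < u x₀ - a := by
      rw [div_lt_iff₀ hr]
      have h3 : dist x₀ y * (2 * C + 1) < r * (u x₀ - a) := by
        rw [← lt_div_iff₀ (by positivity)]
        calc dist x₀ y < r * (u x₀ - a) / (2 * C + 1) := hd
          _ ≤ r * (u x₀ - a) / (2 * C + 1) := le_refl _
      nlinarith
    linarith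
  · intro a ha
    exact husc' a ha
end

section
/- Let u : Ω → ℝ satisfy comparison with cones from above on the annulus A = {x : r₁ < ‖x − x₀‖ < r₂}. Then the function M(r) = max_{‖x−x₀‖=r} u(x) is convex on (r₁, r₂) (Hadamard three-spheres property). More precisely, for r₁ < r < ρ < R < r₂ and ‖x − x₀‖ = ρ, u(x) ≤ (M(R)(ρ − r) + M(r)(R − ρ))/(R − r). -/
open Set

/-- Hadamard three-spheres property: for a function satisfying comparison with
cones from above in an annulus, r ↦ max_{‖x−x₀‖=r} u is convex, and the explicit
three-spheres inequality holds. -/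
theorem three_spheres_convexity {n : ℕ}
    (x₀ : EuclideanSpace ℝ (Fin n)) (r₁ r₂ : ℝ) (hr : 0 < r₁) (hr12 : r₁ < r₂)
    (u : EuclideanSpace ℝ (Fin n) → ℝ)
    (hu : ContinuousOn u {x | r₁ ≤ ‖x - x₀‖ ∧ ‖x - x₀‖ ≤ r₂})
    (hcca : ∀ D : Set (EuclideanSpace ℝ (Fin n)), IsOpen D →
      closure D ⊆ {x | r₁ < ‖x - x₀‖ ∧ ‖x - x₀‖ < r₂} →
      ∀ (b : ℝ) (z : EuclideanSpace ℝ (Fin n)), z ∉ D →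
        ∀ x ∈ D, u x - b * ‖x - z‖
          ≤ sSup ((fun ξ => u ξ - b * ‖ξ - z‖) '' frontier D))
    (M : ℝ → ℝ) (hM : ∀ ρ, M ρ = sSup (u '' Metric.sphere x₀ ρ)) :
    ConvexOn ℝ (Ioo r₁ r₂) M ∧
    (∀ r ρ R : ℝ, r₁ < r → r < ρ → ρ < R → R < r₂ →
      ∀ x, ‖x - x₀‖ = ρ →
        u x ≤ (M R * (ρ - r) + M r * (R - ρ)) / (R - r)) := by
  have hnorm : Continuous fun y : EuclideanSpace ℝ (Fin n) => ‖y - x₀‖ :=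
    (continuous_id.sub continuous_const).norm
  -- spheres of radius in [r₁, r₂] lie in the closed annulus
  have hsub : ∀ ρ : ℝ, r₁ ≤ ρ → ρ ≤ r₂ →
      Metric.sphere x₀ ρ ⊆ {x | r₁ ≤ ‖x - x₀‖ ∧ ‖x - x₀‖ ≤ r₂} := by
    intro ρ h1 h2 y hy
    rw [Metric.mem_sphere, dist_eq_norm] at hy
    exact ⟨by rw [hy]; exact h1, by rw [hy]; exact h2⟩
  have hbdd : ∀ ρ : ℝ, r₁ ≤ ρ → ρ ≤ r₂ → BddAbove (u '' Metric.sphere x₀ ρ) := by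
    intro ρ h1 h2
    exact ((isCompact_sphere x₀ ρ).image_of_continuousOn
      (hu.mono (hsub ρ h1 h2))).bddAbove
  have hle : ∀ ρ : ℝ, r₁ ≤ ρ → ρ ≤ r₂ → ∀ x, ‖x - x₀‖ = ρ → u x ≤ M ρ := by
    intro ρ h1 h2 x hx
    rw [hM ρ]
    refine le_csSup (hbdd ρ h1 h2) ?_
    exact mem_image_of_mem u (by rw [Metric.mem_sphere, dist_eq_norm]; exact hx)
  have key : ∀ r ρ R : ℝ, r₁ < r → r < ρ → ρ < R → R < r₂ →
      ∀ x, ‖x - x₀‖ = ρ →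
        u x ≤ (M R * (ρ - r) + M r * (R - ρ)) / (R - r) := by
    intro r ρ R h1 h2 h3 h4 x hx
    have hrR : r < R := h2.trans h3
    have hRr : (0:ℝ) < R - r := by linarith
    set b : ℝ := (M R - M r) / (R - r) with hb
    set c : ℝ := (M r * R - M R * r) / (R - r) with hc
    set D : Set (EuclideanSpace ℝ (Fin n)) :=
      {y | r < ‖y - x₀‖ ∧ ‖y - x₀‖ < R} with hD
    have hDopen : IsOpen D := by
      have : D = (fun y => ‖y - x₀‖) ⁻¹' Ioo r R := rfl
      rw [this]
      exact isOpen_Ioo.preimage hnorm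
    have hDclosed : closure D ⊆ {y | r ≤ ‖y - x₀‖ ∧ ‖y - x₀‖ ≤ R} := by
      refine closure_minimal ?_ ?_
      · intro y hy; exact ⟨le_of_lt hy.1, le_of_lt hy.2⟩
      · have : {y : EuclideanSpace ℝ (Fin n) | r ≤ ‖y - x₀‖ ∧ ‖y - x₀‖ ≤ R}
            = (fun y => ‖y - x₀‖) ⁻¹' Icc r R := rfl
        rw [this]
        exact isClosed_Icc.preimage hnorm
    have hDsub : closure D ⊆ {y | r₁ < ‖y - x₀‖ ∧ ‖y - x₀‖ < r₂} := by
      intro y hy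
      obtain ⟨hy1, hy2⟩ := hDclosed hy
      exact ⟨lt_of_lt_of_le h1 hy1, lt_of_le_of_lt hy2 h4⟩
    have hx₀ : x₀ ∉ D := by
      intro h
      simp only [hD, Set.mem_setOf_eq, sub_self, norm_zero] at h
      linarith [h.1, hr.trans h1]
    have hxD : x ∈ D := ⟨by rw [hx]; exact h2, by rw [hx]; exact h3⟩
    have hmain := hcca D hDopen hDsub b x₀ hx₀ x hxD
    -- frontier points lie on one of the two spheres
    have hfr : ∀ y ∈ frontier D, ‖y - x₀‖ = r ∨ ‖y - x₀‖ = R := by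
      intro y hy
      rw [hDopen.frontier_eq] at hy
      obtain ⟨hyc, hyD⟩ := hy
      obtain ⟨hy1, hy2⟩ := hDclosed hyc
      rcases eq_or_lt_of_le hy1 with h | h
      · exact Or.inl h.symm
      rcases eq_or_lt_of_le hy2 with h' | h'
      · exact Or.inr h'
      exact absurd ⟨h, h'⟩ hyD
    -- frontier is nonempty (the space is connected, D nonempty and ≠ univ)
    have hfrne : (frontier D).Nonempty := by
      rcases eq_empty_or_nonempty (frontier D) with hfe | hfe
      · exfalso
        have hclopen : IsClopen D := isClopen_iff_frontier_eq_empty.mpr hfe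
        rcases isClopen_iff.mp hclopen with h | h
        · rw [h] at hxD; exact hxD
        · rw [h] at hx₀; exact hx₀ (mem_univ _)
      · exact hfe
    -- bound the sup over the frontier
    have hsup : sSup ((fun ξ => u ξ - b * ‖ξ - x₀‖) '' frontier D) ≤ c := by
      refine csSup_le (hfrne.image _) ?_
      rintro _ ⟨y, hy, rfl⟩
      rcases hfr y hy with h | h
      · have hur := hle r (le_of_lt h1) (by linarith) y h
        show u y - b * ‖y - x₀‖ ≤ c
        rw [h]
        have hcr : M r - b * r = c := by
          rw [hb, hc]; field_simp; ring
        linarith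
      · have hur := hle R (by linarith) (le_of_lt h4) y h
        show u y - b * ‖y - x₀‖ ≤ c
        rw [h]
        have hcR : M R - b * R = c := by
          rw [hb, hc]; field_simp; ring
        linarith
    have : u x - b * ρ ≤ c := by
      rw [← hx]; exact hmain.trans hsup
    have hgoal : c + b * ρ = (M R * (ρ - r) + M r * (R - ρ)) / (R - r) := by
      rw [hb, hc]; field_simp; ring
    linarith
  refine ⟨?_, key⟩
  -- convexity
  have conv2 : ∀ a b : ℝ, a ∈ Ioo r₁ r₂ → b ∈ Ioo r₁ r₂ → a < b →
      ∀ s t : ℝ, 0 < s → 0 < t → s + t = 1 → M (s * a + t * b) ≤ s * M a + t * M b := by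
    intro a b ha hb hab s t hs ht hst
    set ρ := s * a + t * b with hρ
    have hsa : s * a < s * b := (mul_lt_mul_iff_right₀ hs).mpr hab
    have hta : t * a < t * b := (mul_lt_mul_iff_right₀ ht).mpr hab
    have hsta : s * a + t * a = a := by rw [← add_mul, hst, one_mul]
    have hstb : s * b + t * b = b := by rw [← add_mul, hst, one_mul]
    have hρa : a < ρ := by rw [hρ]; linarith
    have hρb : ρ < b := by rw [hρ]; linarith
    have hρ0 : (0:ℝ) < ρ := (hr.trans ha.1).trans hρa
    rcases eq_empty_or_nonempty (Metric.sphere x₀ ρ) with hse | hse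
    · -- degenerate case: the space is a single point, all spheres are empty
      have hsea : Metric.sphere x₀ a = ∅ := by
        rcases eq_empty_or_nonempty (Metric.sphere x₀ a) with h | h
        · exact h
        exfalso
        obtain ⟨y, hy⟩ := h
        rw [Metric.mem_sphere, dist_eq_norm] at hy
        have ha0 : (0:ℝ) < a := hr.trans ha.1
        have : x₀ + (ρ / a) • (y - x₀) ∈ Metric.sphere x₀ ρ := by
          rw [Metric.mem_sphere, dist_eq_norm]
          have : x₀ + (ρ / a) • (y - x₀) - x₀ = (ρ / a) • (y - x₀) := by abel
          rw [this, norm_smul, hy, Real.norm_eq_abs, abs_of_pos (div_pos hρ0 ha0)]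
          field_simp
        rw [hse] at this
        exact this
      have hseb : Metric.sphere x₀ b = ∅ := by
        rcases eq_empty_or_nonempty (Metric.sphere x₀ b) with h | h
        · exact h
        exfalso
        obtain ⟨y, hy⟩ := h
        rw [Metric.mem_sphere, dist_eq_norm] at hy
        have hb0 : (0:ℝ) < b := hr.trans hb.1
        have : x₀ + (ρ / b) • (y - x₀) ∈ Metric.sphere x₀ ρ := by
          rw [Metric.mem_sphere, dist_eq_norm]
          have : x₀ + (ρ / b) • (y - x₀) - x₀ = (ρ / b) • (y - x₀) := by abel
          rw [this, norm_smul, hy, Real.norm_eq_abs, abs_of_pos (div_pos hρ0 hb0)]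
          field_simp
        rw [hse] at this
        exact this
      rw [hM ρ, hM a, hM b, hse, hsea, hseb]
      simp [Real.sSup_empty]
    · rw [hM ρ]
      refine csSup_le (hse.image u) ?_
      rintro _ ⟨y, hy, rfl⟩
      rw [Metric.mem_sphere, dist_eq_norm] at hy
      have hkey := key a ρ b ha.1 hρa hρb hb.2 y hy
      have hba : (0:ℝ) < b - a := by linarith
      have heq : (M b * (ρ - a) + M a * (b - ρ)) / (b - a) = s * M a + t * M b := by
        rw [hρ]
        rw [div_eq_iff (ne_of_gt hba)]
        linear_combination (M b * a - M a * b) * hst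
      rw [heq] at hkey
      exact hkey
  constructor
  · exact convex_Ioo r₁ r₂
  · intro a ha b hb s t hs ht hst
    simp only [smul_eq_mul]
    rcases eq_or_lt_of_le hs with h | hs'
    · have ht1 : t = 1 := by linarith
      rw [← h, ht1]; simp
    rcases eq_or_lt_of_le ht with h | ht'
    · have hs1 : s = 1 := by linarith
      rw [← h, hs1]; simp
    rcases lt_trichotomy a b with h | h | h
    · exact conv2 a b ha hb h s t hs' ht' hst
    · rw [h]
      have h1 : s * b + t * b = b := by rw [← add_mul, hst, one_mul]
      have h2 : s * M b + t * M b = M b := by rw [← add_mul, hst, one_mul]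
      rw [h1, h2]
    · have := conv2 b a hb ha h t s ht' hs' (by linarith)
      calc M (s * a + t * b) = M (t * b + s * a) := by rw [add_comm]
        _ ≤ t * M b + s * M a := this
        _ = s * M a + t * M b := by ring
end
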